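/- Let 𝓖 be an undirected graph on N vertices with Laplacian 𝓛, 𝓥_l a nonempty set of informed agents with indicator diagonal matrix E, and fix 0 < m_ψ ≤ L_ψ. There exist constants 0 < m ≤ L such that f(y) = ½(y−r)ᵀ(𝓛⊗I_d)(y−r) + Σ_{i∈𝓥_l} ψ(y_i) belongs to S(m,L) for every ψ ∈ S(m_ψ,L_ψ), if and only if every vertex of 𝓖 has a path to some vertex in 𝓥_l. -/

import Mathlib

open Matrix
open scoped Kronecker

def memS {E : Type*} [NormedAddCommGroup E] [InnerProductSpace ℝ E] [CompleteSpace E]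
    (m L : ℝ) (f : E → ℝ) : Prop :=
  ContDiff ℝ 1 f ∧
    ∀ y₁ y₂ : E,
      m * ‖y₁ - y₂‖ ^ 2 ≤ (inner ℝ (gradient f y₁ - gradient f y₂) (y₁ - y₂) : ℝ) ∧
      (inner ℝ (gradient f y₁ - gradient f y₂) (y₁ - y₂) : ℝ) ≤ L * ‖y₁ - y₂‖ ^ 2

noncomputable def bigf {N d : ℕ} (𝓛 : Matrix (Fin N) (Fin N) ℝ)
    (r : EuclideanSpace ℝ (Fin N × Fin d)) (Vl : Finset (Fin N))
    (ψ : EuclideanSpace ℝ (Fin d) → ℝ) (y : EuclideanSpace ℝ (Fin N × Fin d)) : ℝ :=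
  (1 / 2) * ((fun p => y p - r p) ⬝ᵥ
      (𝓛 ⊗ₖ (1 : Matrix (Fin d) (Fin d) ℝ)).mulVec (fun p => y p - r p))
    + ∑ i ∈ Vl, ψ (WithLp.toLp 2 (fun j => y (i, j)))

open scoped RealInnerProductSpace

/-!
With `Δ = y₁ - y₂`, the monotonicity form of `f` splits as
`⟪∇f y₁ - ∇f y₂, Δ⟫ = ⟪Δ, (𝓛 ⊗ I) Δ⟫ + ∑ i ∈ 𝓥_l, ⟪∇ψ y₁ᵢ - ∇ψ y₂ᵢ, Δᵢ⟫`.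
If every vertex reaches `𝓥_l`, the grounded form `⟪Δ, (𝓛 ⊗ I) Δ⟫ + m_ψ ∑ i ∈ 𝓥_l, ‖Δᵢ‖²` is
positive definite, because coordinatewise it vanishes only on vectors that are constant on the
components of `𝓖` and zero on `𝓥_l`; by compactness of the unit sphere it is at least `m ‖Δ‖²`,
and `‖𝓛 ⊗ I‖ + L_ψ` bounds the form from above. Conversely, if a vertex `v` reaches no informed
agent, the indicator `z` of its component (in every coordinate) is annihilated by `𝓛 ⊗ I` and
vanishes on `𝓥_l`, so for `ψ = m_ψ ‖·‖² / 2` the form at `(z, 0)` is `0`, not `≥ m ‖z‖² > 0`.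
-/

theorem dotProduct_kronecker_one_mulVec {ι κ R : Type*} [Fintype ι] [Fintype κ] [DecidableEq κ]
    [CommSemiring R] (A : Matrix ι ι R) (x : ι × κ → R) :
    x ⬝ᵥ (A ⊗ₖ (1 : Matrix κ κ R)) *ᵥ x =
      ∑ j, (fun i => x (i, j)) ⬝ᵥ A *ᵥ (fun i => x (i, j)) := by
  simp only [dotProduct, mulVec, kroneckerMap_apply, one_apply, mul_ite, mul_one, mul_zero, ite_mul,
    zero_mul, Fintype.sum_prod_type, Finset.sum_ite_eq, Finset.mem_univ, ↓reduceIte, Finset.mul_sum]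
  rw [Finset.sum_comm]

theorem inner_gradient_sub_gradient {E : Type*} [NormedAddCommGroup E] [InnerProductSpace ℝ E]
    [CompleteSpace E] (f : E → ℝ) (x y v : E) :
    ⟪gradient f x - gradient f y, v⟫ = fderiv ℝ f x v - fderiv ℝ f y v := by
  simp only [gradient, inner_sub_left, InnerProductSpace.toDual_symm_apply]

theorem exists_pos_mul_norm_sq_le {E : Type*} [NormedAddCommGroup E] [NormedSpace ℝ E]
    [FiniteDimensional ℝ E] {Q : E → ℝ} (hQ : Continuous Q)
    (hsmul : ∀ (c : ℝ) x, Q (c • x) = c ^ 2 * Q x) (hpos : ∀ x, x ≠ 0 → 0 < Q x) :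
    ∃ m, 0 < m ∧ ∀ x, m * ‖x‖ ^ 2 ≤ Q x := by
  have hQ0 : Q 0 = 0 := by simpa using hsmul 0 0
  rcases subsingleton_or_nontrivial E with hE | hE
  · exact ⟨1, one_pos, fun x => by simp [Subsingleton.elim x 0, hQ0]⟩
  obtain ⟨u, hu, hmin⟩ := (isCompact_sphere (0 : E) 1).exists_isMinOn
    (NormedSpace.sphere_nonempty.mpr zero_le_one) hQ.continuousOn
  have hu0 : u ≠ 0 := ne_zero_of_mem_unit_sphere ⟨u, hu⟩
  refine ⟨Q u, hpos u hu0, fun x => ?_⟩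
  rcases eq_or_ne x 0 with rfl | hx
  · simp [hQ0]
  have hx' : ‖x‖⁻¹ • x ∈ Metric.sphere (0 : E) 1 := by
    simp [norm_smul, hx]
  calc Q u * ‖x‖ ^ 2 ≤ Q (‖x‖⁻¹ • x) * ‖x‖ ^ 2 := by gcongr; exact hmin hx'
    _ = Q x := by rw [hsmul]; field_simp

section StrongMonotonicity

variable {E : Type*} [NormedAddCommGroup E] [InnerProductSpace ℝ E] [CompleteSpace E]

theorem memS.mono {m L m' L' : ℝ} {f : E → ℝ} (hf : memS m L f) (hm : m' ≤ m) (hL : L ≤ L') :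
    memS m' L' f :=
  ⟨hf.1, fun y₁ y₂ =>
    ⟨(mul_le_mul_of_nonneg_right hm (sq_nonneg _)).trans (hf.2 y₁ y₂).1,
      (hf.2 y₁ y₂).2.trans (mul_le_mul_of_nonneg_right hL (sq_nonneg _))⟩⟩

theorem memS_half_mul_norm_sq (c : ℝ) : memS c c fun x : E => c / 2 * ‖x‖ ^ 2 := by
  refine ⟨contDiff_const.mul (contDiff_norm_sq ℝ), fun y₁ y₂ => ?_⟩
  have hd : ∀ x : E, DifferentiableAt ℝ (fun x : E => ‖x‖ ^ 2) x :=
    fun x => (contDiff_norm_sq ℝ).differentiable one_ne_zero x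
  have key : ⟪gradient (fun x : E => c / 2 * ‖x‖ ^ 2) y₁ - gradient (fun x => c / 2 * ‖x‖ ^ 2) y₂,
      y₁ - y₂⟫ = c * ‖y₁ - y₂‖ ^ 2 := by
    rw [inner_gradient_sub_gradient, fderiv_const_mul (hd y₁), fderiv_const_mul (hd y₂)]
    simp only [fderiv_norm_sq_apply, _root_.smul_apply, coe_innerSL_apply, nsmul_eq_mul,
      Nat.cast_ofNat, smul_eq_mul]
    rw [← mul_sub, ← mul_sub, ← inner_sub_left, real_inner_self_eq_norm_sq]
    ring
  exact ⟨key.ge, key.le⟩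

end StrongMonotonicity

namespace SimpleGraph

variable {V : Type*} [Fintype V] [DecidableEq V] (G : SimpleGraph V) [DecidableRel G.Adj]

theorem dotProduct_lapMatrix_mulVec_nonneg (x : V → ℝ) : 0 ≤ x ⬝ᵥ G.lapMatrix ℝ *ᵥ x := by
  simpa using (G.posSemidef_lapMatrix ℝ).dotProduct_mulVec_nonneg x

theorem dotProduct_lapMatrix_mulVec_eq_zero_iff (x : V → ℝ) :
    x ⬝ᵥ G.lapMatrix ℝ *ᵥ x = 0 ↔ ∀ i j, G.Reachable i j → x i = x j := by
  rw [← toLinearMap₂'_apply', lapMatrix_toLinearMap₂'_apply'_eq_zero_iff_forall_reachable]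

theorem dotProduct_lapMatrix_mulVec_add_pos {S : Finset V} (hS : ∀ v, ∃ w ∈ S, G.Reachable v w)
    {c : ℝ} (hc : 0 < c) {x : V → ℝ} (hx : x ≠ 0) :
    0 < x ⬝ᵥ G.lapMatrix ℝ *ᵥ x + c * ∑ i ∈ S, x i ^ 2 := by
  have hlap := G.dotProduct_lapMatrix_mulVec_nonneg x
  have hsum : 0 ≤ c * ∑ i ∈ S, x i ^ 2 := by positivity
  refine lt_of_le_of_ne (by positivity) fun h => hx ?_
  have hlap0 : x ⬝ᵥ G.lapMatrix ℝ *ᵥ x = 0 := by linarith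
  have hsum0 : ∑ i ∈ S, x i ^ 2 = 0 := (mul_eq_zero.mp (by linarith)).resolve_left hc.ne'
  have hS0 : ∀ i ∈ S, x i ^ 2 = 0 :=
    (Finset.sum_eq_zero_iff_of_nonneg fun i _ => sq_nonneg (x i)).mp hsum0
  funext v
  obtain ⟨w, hw, hvw⟩ := hS v
  rw [(G.dotProduct_lapMatrix_mulVec_eq_zero_iff x).mp hlap0 v w hvw, Pi.zero_apply,
    pow_eq_zero_iff two_ne_zero |>.mp (hS0 w hw)]

theorem dotProduct_lapMatrix_mulVec_indicator_reachable (v : V) :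
    (fun i => if G.Reachable i v then (1 : ℝ) else 0) ⬝ᵥ
      G.lapMatrix ℝ *ᵥ (fun i => if G.Reachable i v then (1 : ℝ) else 0) = 0 := by
  rw [dotProduct_lapMatrix_mulVec_eq_zero_iff]
  intro i j hij
  simp only [show G.Reachable i v ↔ G.Reachable j v from ⟨hij.symm.trans, hij.trans⟩]

end SimpleGraph

section BlockVectors

variable {ι κ : Type*} [Fintype ι] [Fintype κ]

noncomputable def blockProj (i : ι) : EuclideanSpace ℝ (ι × κ) →L[ℝ] EuclideanSpace ℝ κ :=
  LinearMap.toContinuousLinearMap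
    { toFun := fun y => WithLp.toLp 2 fun j => y (i, j)
      map_add' := fun _ _ => rfl
      map_smul' := fun _ _ => rfl }

@[simp]
theorem blockProj_apply (i : ι) (y : EuclideanSpace ℝ (ι × κ)) (j : κ) :
    blockProj i y j = y (i, j) := rfl

theorem norm_blockProj_sq (i : ι) (y : EuclideanSpace ℝ (ι × κ)) :
    ‖blockProj i y‖ ^ 2 = ∑ j, y (i, j) ^ 2 := by
  simp [EuclideanSpace.norm_sq_eq]

theorem sum_norm_blockProj_sq_le (s : Finset ι) (y : EuclideanSpace ℝ (ι × κ)) :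
    ∑ i ∈ s, ‖blockProj i y‖ ^ 2 ≤ ‖y‖ ^ 2 := by
  calc ∑ i ∈ s, ‖blockProj i y‖ ^ 2 ≤ ∑ i, ‖blockProj i y‖ ^ 2 :=
        Finset.sum_le_sum_of_subset_of_nonneg (Finset.subset_univ s) fun _ _ _ => by positivity
    _ = ‖y‖ ^ 2 := by simp [EuclideanSpace.norm_sq_eq, Fintype.sum_prod_type]

variable [DecidableEq ι]

noncomputable def kronOneCLM (κ : Type*) [Fintype κ] [DecidableEq κ] (A : Matrix ι ι ℝ) :
    EuclideanSpace ℝ (ι × κ) →L[ℝ] EuclideanSpace ℝ (ι × κ) :=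
  Matrix.toEuclideanCLM (𝕜 := ℝ) (n := ι × κ) (A ⊗ₖ (1 : Matrix κ κ ℝ))

variable [DecidableEq κ]

theorem inner_kronOneCLM (A : Matrix ι ι ℝ) (x y : EuclideanSpace ℝ (ι × κ)) :
    ⟪x, kronOneCLM κ A y⟫ = x ⬝ᵥ (A ⊗ₖ (1 : Matrix κ κ ℝ)) *ᵥ y :=
  inner_toEuclideanCLM _ x y

theorem inner_kronOneCLM_self (A : Matrix ι ι ℝ) (x : EuclideanSpace ℝ (ι × κ)) :
    ⟪x, kronOneCLM κ A x⟫ = ∑ j, (fun i => x (i, j)) ⬝ᵥ A *ᵥ (fun i => x (i, j)) := by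
  rw [inner_kronOneCLM, dotProduct_kronecker_one_mulVec]

end BlockVectors

section Bigf

variable {N d : ℕ} (A : Matrix (Fin N) (Fin N) ℝ) (r : EuclideanSpace ℝ (Fin N × Fin d))
  (Vl : Finset (Fin N)) {ψ : EuclideanSpace ℝ (Fin d) → ℝ}

theorem bigf_eq : bigf A r Vl ψ =
    fun y => 1 / 2 * ⟪y - r, kronOneCLM (Fin d) A (y - r)⟫ + ∑ i ∈ Vl, ψ (blockProj i y) := by
  funext y
  rw [inner_kronOneCLM]
  rfl

theorem contDiff_bigf (hψ : ContDiff ℝ 1 ψ) : ContDiff ℝ 1 (bigf A r Vl ψ) := by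
  have hsub : ContDiff ℝ 1 fun y : EuclideanSpace ℝ (Fin N × Fin d) => y - r :=
    contDiff_id.sub contDiff_const
  rw [bigf_eq]
  have hq := hsub.inner ℝ ((kronOneCLM (Fin d) A).contDiff.comp hsub)
  have hs : ContDiff ℝ 1 fun y => ∑ i ∈ Vl, ψ (blockProj i y) :=
    ContDiff.sum fun i _ => hψ.comp (blockProj (κ := Fin d) i).contDiff
  exact (contDiff_const.mul hq).add hs

theorem fderiv_bigf_apply (hψ : Differentiable ℝ ψ) (y v : EuclideanSpace ℝ (Fin N × Fin d)) :
    fderiv ℝ (bigf A r Vl ψ) y v =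
      1 / 2 * (⟪y - r, kronOneCLM (Fin d) A v⟫ + ⟪v, kronOneCLM (Fin d) A (y - r)⟫) +
        ∑ i ∈ Vl, fderiv ℝ ψ (blockProj i y) (blockProj i v) := by
  have hsub : HasFDerivAt (fun z : EuclideanSpace ℝ (Fin N × Fin d) => z - r)
      (ContinuousLinearMap.id ℝ _) y := (hasFDerivAt_id y).sub_const r
  have hT : HasFDerivAt (fun z => kronOneCLM (Fin d) A (z - r))
      ((kronOneCLM (Fin d) A).comp (ContinuousLinearMap.id ℝ _)) y :=
    (kronOneCLM (Fin d) A).hasFDerivAt.comp y hsub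
  have hq := hsub.inner ℝ hT
  have hs : HasFDerivAt (fun y => ∑ i ∈ Vl, ψ (blockProj i y))
      (∑ i ∈ Vl, (fderiv ℝ ψ (blockProj i y)).comp (blockProj i)) y :=
    HasFDerivAt.fun_sum fun i _ =>
      (hψ (blockProj i y)).hasFDerivAt.comp y (blockProj i).hasFDerivAt
  rw [bigf_eq, ((hq.const_mul (1 / 2 : ℝ)).fun_add hs).fderiv]
  simp [fderivInnerCLM_apply]

theorem inner_gradient_bigf_sub (hψ : Differentiable ℝ ψ)
    (y₁ y₂ : EuclideanSpace ℝ (Fin N × Fin d)) :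
    ⟪gradient (bigf A r Vl ψ) y₁ - gradient (bigf A r Vl ψ) y₂, y₁ - y₂⟫ =
      ⟪y₁ - y₂, kronOneCLM (Fin d) A (y₁ - y₂)⟫ +
        ∑ i ∈ Vl, ⟪gradient ψ (blockProj i y₁) - gradient ψ (blockProj i y₂),
          blockProj i y₁ - blockProj i y₂⟫ := by
  simp only [inner_gradient_sub_gradient, fderiv_bigf_apply A r Vl hψ]
  simp only [map_sub, inner_sub_left, inner_sub_right, Finset.sum_sub_distrib]
  ring

theorem memS_bigf_of_coercive {m mψ Lψ : ℝ} (hLψ : 0 ≤ Lψ)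
    (hA : ∀ x, m * ‖x‖ ^ 2 ≤ ⟪x, kronOneCLM (Fin d) A x⟫ + mψ * ∑ i ∈ Vl, ‖blockProj i x‖ ^ 2)
    (hψ : memS mψ Lψ ψ) :
    memS m (‖kronOneCLM (Fin d) A‖ + Lψ) (bigf A r Vl ψ) := by
  refine ⟨contDiff_bigf A r Vl hψ.1, fun y₁ y₂ => ?_⟩
  rw [inner_gradient_bigf_sub A r Vl (hψ.1.differentiable one_ne_zero)]
  have hψi : ∀ i, mψ * ‖blockProj i (y₁ - y₂)‖ ^ 2 ≤
        ⟪gradient ψ (blockProj i y₁) - gradient ψ (blockProj i y₂),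
          blockProj i y₁ - blockProj i y₂⟫ ∧
      ⟪gradient ψ (blockProj i y₁) - gradient ψ (blockProj i y₂),
          blockProj i y₁ - blockProj i y₂⟫ ≤ Lψ * ‖blockProj i (y₁ - y₂)‖ ^ 2 :=
    fun i => by rw [map_sub]; exact hψ.2 _ _
  set Δ := y₁ - y₂
  have hK : ⟪Δ, kronOneCLM (Fin d) A Δ⟫ ≤ ‖kronOneCLM (Fin d) A‖ * ‖Δ‖ ^ 2 := by
    calc ⟪Δ, kronOneCLM (Fin d) A Δ⟫ ≤ ‖Δ‖ * ‖kronOneCLM (Fin d) A Δ‖ := real_inner_le_norm _ _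
      _ ≤ ‖Δ‖ * (‖kronOneCLM (Fin d) A‖ * ‖Δ‖) := by
          gcongr; exact (kronOneCLM (Fin d) A).le_opNorm Δ
      _ = ‖kronOneCLM (Fin d) A‖ * ‖Δ‖ ^ 2 := by ring
  have hlow := Finset.sum_le_sum fun i (_ : i ∈ Vl) => (hψi i).1
  have hup := Finset.sum_le_sum fun i (_ : i ∈ Vl) => (hψi i).2
  rw [← Finset.mul_sum] at hlow hup
  have hVl := mul_le_mul_of_nonneg_left (sum_norm_blockProj_sq_le Vl Δ) hLψ
  constructor <;> nlinarith [hA Δ]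

end Bigf

section GroundedLaplacian

variable {V κ : Type*} [Fintype V] [DecidableEq V] [Fintype κ] [DecidableEq κ]
  (G : SimpleGraph V) [DecidableRel G.Adj] (S : Finset V) (c : ℝ)

theorem inner_kronOneCLM_lapMatrix_add_pos (hS : ∀ v, ∃ w ∈ S, G.Reachable v w) (hc : 0 < c)
    {x : EuclideanSpace ℝ (V × κ)} (hx : x ≠ 0) :
    0 < ⟪x, kronOneCLM κ (G.lapMatrix ℝ) x⟫ + c * ∑ i ∈ S, ‖blockProj i x‖ ^ 2 := by
  have hcols : ⟪x, kronOneCLM κ (G.lapMatrix ℝ) x⟫ + c * ∑ i ∈ S, ‖blockProj i x‖ ^ 2 =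
      ∑ j, ((fun i => x (i, j)) ⬝ᵥ G.lapMatrix ℝ *ᵥ (fun i => x (i, j)) +
        c * ∑ i ∈ S, x (i, j) ^ 2) := by
    simp only [inner_kronOneCLM_self, norm_blockProj_sq, Finset.sum_add_distrib, Finset.mul_sum]
    rw [Finset.sum_comm (s := S)]
  obtain ⟨p, hp⟩ : ∃ p, x p ≠ 0 := by
    by_contra! h
    exact hx (by ext p; simp [h p])
  rw [hcols]
  refine Finset.sum_pos' (fun j _ => ?_) ⟨p.2, Finset.mem_univ _, ?_⟩
  · have := G.dotProduct_lapMatrix_mulVec_nonneg fun i => x (i, j)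
    positivity
  · refine G.dotProduct_lapMatrix_mulVec_add_pos hS hc fun h => hp ?_
    simpa using congrFun h p.1

theorem exists_pos_mul_norm_sq_le_inner_kronOneCLM_lapMatrix_add
    (hS : ∀ v, ∃ w ∈ S, G.Reachable v w) (hc : 0 < c) :
    ∃ m, 0 < m ∧ ∀ x : EuclideanSpace ℝ (V × κ),
      m * ‖x‖ ^ 2 ≤ ⟪x, kronOneCLM κ (G.lapMatrix ℝ) x⟫ + c * ∑ i ∈ S, ‖blockProj i x‖ ^ 2 := by
  refine exists_pos_mul_norm_sq_le (by fun_prop) (fun a x => ?_)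
    fun x hx => inner_kronOneCLM_lapMatrix_add_pos G S c hS hc hx
  simp only [map_smul, inner_smul_left, inner_smul_right, conj_trivial, norm_smul, mul_pow,
    Real.norm_eq_abs, sq_abs, ← Finset.mul_sum]
  ring

end GroundedLaplacian

section Reachability

variable {N d : ℕ} (G : SimpleGraph (Fin N)) [DecidableRel G.Adj] (Vl : Finset (Fin N))
  (r : EuclideanSpace ℝ (Fin N × Fin d)) {mψ Lψ : ℝ}

theorem exists_memS_bigf_of_forall_reachable (hmψ : 0 < mψ) (hLψ : 0 ≤ Lψ)
    (hreach : ∀ v, ∃ w ∈ Vl, G.Reachable v w) :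
    ∃ m L : ℝ, 0 < m ∧ m ≤ L ∧ ∀ ψ : EuclideanSpace ℝ (Fin d) → ℝ, memS mψ Lψ ψ →
      memS m L (bigf (G.lapMatrix ℝ) r Vl ψ) := by
  obtain ⟨m, hm, hcoer⟩ :=
    exists_pos_mul_norm_sq_le_inner_kronOneCLM_lapMatrix_add (κ := Fin d) G Vl mψ hreach hmψ
  exact ⟨m, max (‖kronOneCLM (Fin d) (G.lapMatrix ℝ)‖ + Lψ) m, hm, le_max_right _ _,
    fun ψ hψ => (memS_bigf_of_coercive _ r Vl hLψ hcoer hψ).mono le_rfl (le_max_left _ _)⟩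

theorem forall_reachable_of_memS_bigf [NeZero d] {m L : ℝ} (hm : 0 < m) (hmLψ : mψ ≤ Lψ)
    (h : ∀ ψ : EuclideanSpace ℝ (Fin d) → ℝ, memS mψ Lψ ψ →
      memS m L (bigf (G.lapMatrix ℝ) r Vl ψ)) :
    ∀ v, ∃ w ∈ Vl, G.Reachable v w := by
  intro v
  by_contra! hv
  let z : EuclideanSpace ℝ (Fin N × Fin d) :=
    WithLp.toLp 2 fun p => if G.Reachable p.1 v then 1 else 0
  have hψ := (memS_half_mul_norm_sq (E := EuclideanSpace ℝ (Fin d)) mψ).mono le_rfl hmLψ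
  have hKz : ⟪z, kronOneCLM (Fin d) (G.lapMatrix ℝ) z⟫ = 0 := by
    simp [inner_kronOneCLM_self, z, G.dotProduct_lapMatrix_mulVec_indicator_reachable]
  have hPz : ∀ i ∈ Vl, blockProj i z = 0 := fun i hi => by
    ext j
    simpa [z] using fun h => hv i hi h.symm
  have hz : z ≠ 0 := fun h0 => by
    simpa [z] using congrArg (fun x : EuclideanSpace ℝ (Fin N × Fin d) => x (v, 0)) h0
  have hf := ((h _ hψ).2 z 0).1
  rw [inner_gradient_bigf_sub _ r Vl (hψ.1.differentiable one_ne_zero), sub_zero, hKz,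
    Finset.sum_eq_zero fun i hi => by simp [hPz i hi]] at hf
  exact (mul_pos hm (pow_pos (norm_pos_iff.mpr hz) 2)).not_ge (by simpa using hf)

end Reachability

theorem stmt4_general {N d : ℕ} [NeZero d]
    (G : SimpleGraph (Fin N)) [DecidableRel G.Adj]
    (Vl : Finset (Fin N))
    (r : EuclideanSpace ℝ (Fin N × Fin d)) (mψ Lψ : ℝ) (hmψ : 0 < mψ) (hmLψ : mψ ≤ Lψ) :
    (∃ m L : ℝ, 0 < m ∧ m ≤ L ∧
        ∀ ψ : EuclideanSpace ℝ (Fin d) → ℝ, memS mψ Lψ ψ →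
          memS m L (bigf (G.lapMatrix ℝ) r Vl ψ)) ↔
      ∀ v : Fin N, ∃ w ∈ Vl, G.Reachable v w := by
  constructor
  · rintro ⟨m, L, hm, -, h⟩
    exact forall_reachable_of_memS_bigf G Vl r hm hmLψ h
  · exact exists_memS_bigf_of_forall_reachable G Vl r hmψ (hmψ.le.trans hmLψ)

/-- there exist `0 < m ≤ L` with `f ∈ S(m,L)` for every `ψ ∈ S(m_ψ,L_ψ)`
iff every vertex of the graph has a path to some informed agent. -/
theorem stmt4 {N d : ℕ} [NeZero N] [NeZero d]
    (G : SimpleGraph (Fin N)) [DecidableRel G.Adj]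
    (Vl : Finset (Fin N)) (hVl : Vl.Nonempty)
    (r : EuclideanSpace ℝ (Fin N × Fin d)) (mψ Lψ : ℝ) (hmψ : 0 < mψ) (hmLψ : mψ ≤ Lψ) :
    (∃ m L : ℝ, 0 < m ∧ m ≤ L ∧
        ∀ ψ : EuclideanSpace ℝ (Fin d) → ℝ, memS mψ Lψ ψ →
          memS m L (bigf (G.lapMatrix ℝ) r Vl ψ)) ↔
      ∀ v : Fin N, ∃ w ∈ Vl, G.Reachable v w :=
  stmt4_general G Vl r mψ Lψ hmψ hmLψ
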